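/- arXiv:2508.15131 — 4 statements merged into one kernel-verified Lean document; each statement's English description precedes it below -/
import Mathlib

section
/- Let (c_n)_{n≥1} be a sequence of real numbers with c_n ≥ e for all n and (log c_n)/n → 0 as n → ∞. Then there exists a sequence (s_n)_{n≥1} of real numbers such that (i) s_n ≥ c_n for all n, (ii) (s_n) is monotone increasing, and (iii) the sequence ((log s_n)/n)_{n≥1} is monotone decreasing and converges to 0. -/
/-!
Let `f n = log (c n) / n` and let `a n = sup_{m ≥ n} f m`, an antitone majorant of `f` tending
to `0` (so `a ≥ 0`). Take `log s n = max_{k ≤ n} k * a k`. This is monotone and at least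
`n * a n ≥ log (c n)`. Dividing by `n`, the new term `a (n + 1)` of the maximum at `n + 1` is at
most `a n ≤ (log s n) / n`, and the old ones only shrink, so `(log s n) / n` is antitone.
Finally `(log s n) / n ≤ (log s N) / n + a N` for every fixed `N`, which gives the limit `0`.
-/

open Filter Topology

noncomputable def tailSup (f : ℕ → ℝ) (n : ℕ) : ℝ := ⨆ m, f (n + m)

section TailSup

variable {f : ℕ → ℝ}

lemma le_tailSup_of_le (hf : BddAbove (Set.range f)) {n m : ℕ} (h : n ≤ m) :
    f m ≤ tailSup f n := by
  obtain ⟨k, rfl⟩ := Nat.exists_eq_add_of_le h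
  exact le_ciSup (f := fun k => f (n + k)) (hf.mono (Set.range_comp_subset_range _ f)) k

lemma tailSup_le {n : ℕ} {b : ℝ} (h : ∀ m, n ≤ m → f m ≤ b) : tailSup f n ≤ b :=
  ciSup_le fun m => h (n + m) (Nat.le_add_right n m)

lemma antitone_tailSup (hf : BddAbove (Set.range f)) : Antitone (tailSup f) :=
  antitone_nat_of_succ_le fun _ => tailSup_le fun _ hm => le_tailSup_of_le hf (by omega)

lemma tendsto_tailSup {l : ℝ} (hf : Tendsto f atTop (𝓝 l)) :
    Tendsto (tailSup f) atTop (𝓝 l) := by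
  refine tendsto_order.2 ⟨fun b hb => ?_, fun b hb => ?_⟩
  · filter_upwards [(tendsto_order.1 hf).1 b hb] with n hn
    exact hn.trans_le (le_tailSup_of_le hf.bddAbove_range le_rfl)
  · obtain ⟨b', hlb', hb'b⟩ := exists_between hb
    obtain ⟨N, hN⟩ := eventually_atTop.1 ((tendsto_order.1 hf).2 b' hlb')
    filter_upwards [eventually_ge_atTop N] with n hn
    exact (tailSup_le fun m hm => (hN m (hn.trans hm)).le).trans_lt hb'b

end TailSup

noncomputable def weightedMax (a : ℕ → ℝ) : ℕ → ℝ := partialSups fun k : ℕ => (k : ℝ) * a k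

section WeightedMax

variable {a : ℕ → ℝ}

lemma monotone_weightedMax : Monotone (weightedMax a) := (partialSups _).monotone

lemma natCast_mul_le_weightedMax {k n : ℕ} (h : k ≤ n) : (k : ℝ) * a k ≤ weightedMax a n :=
  le_partialSups_of_le (fun k : ℕ => (k : ℝ) * a k) h

lemma weightedMax_le {n : ℕ} {b : ℝ} (h : ∀ k ≤ n, (k : ℝ) * a k ≤ b) : weightedMax a n ≤ b :=
  partialSups_le _ n b h

lemma weightedMax_succ (n : ℕ) :
    weightedMax a (n + 1) = weightedMax a n ⊔ (n + 1 : ℕ) * a (n + 1) :=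
  partialSups_succ (fun k : ℕ => (k : ℝ) * a k) n

lemma weightedMax_nonneg (ha : 0 ≤ a) (n : ℕ) : 0 ≤ weightedMax a n :=
  (mul_nonneg (Nat.cast_nonneg 0) (ha 0)).trans (natCast_mul_le_weightedMax (Nat.zero_le n))

lemma weightedMax_div_succ_le (ha : Antitone a) (ha0 : 0 ≤ a) {n : ℕ} (hn : 1 ≤ n) :
    weightedMax a (n + 1) / (n + 1 : ℕ) ≤ weightedMax a n / n := by
  have hn' : (0 : ℝ) < n := by exact_mod_cast hn
  rw [weightedMax_succ, ← max_div_div_right (by positivity)]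
  refine max_le (div_le_div_of_nonneg_left (weightedMax_nonneg ha0 n) hn' (by simp)) ?_
  rw [mul_div_cancel_left₀ _ (by positivity), le_div_iff₀ hn', mul_comm]
  exact (mul_le_mul_of_nonneg_left (ha (Nat.le_succ n)) hn'.le).trans
    (natCast_mul_le_weightedMax le_rfl)

lemma weightedMax_le_add_mul (ha : Antitone a) (ha0 : 0 ≤ a) (N n : ℕ) :
    weightedMax a n ≤ weightedMax a N + n * a N := by
  refine weightedMax_le fun k hk => ?_
  rcases le_total k N with hkN | hNk
  · exact (natCast_mul_le_weightedMax hkN).trans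
      (le_add_of_nonneg_right (mul_nonneg n.cast_nonneg (ha0 N)))
  · refine le_add_of_nonneg_of_le (weightedMax_nonneg ha0 N) ?_
    exact mul_le_mul (by exact_mod_cast hk) (ha hNk) (ha0 k) (Nat.cast_nonneg n)

lemma tendsto_weightedMax_div (ha : Antitone a) (ha0 : 0 ≤ a)
    (hlim : Tendsto a atTop (𝓝 0)) : Tendsto (fun n : ℕ => weightedMax a n / n) atTop (𝓝 0) := by
  refine tendsto_order.2 ⟨fun b hb => Eventually.of_forall fun n =>
    hb.trans_le (div_nonneg (weightedMax_nonneg ha0 n) n.cast_nonneg), fun ε hε => ?_⟩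
  obtain ⟨N, hN⟩ := ((tendsto_order.1 hlim).2 (ε / 2) (half_pos hε)).exists
  have hLN : Tendsto (fun n : ℕ => weightedMax a N / n) atTop (𝓝 0) :=
    tendsto_const_div_atTop_nhds_zero_nat _
  filter_upwards [(tendsto_order.1 hLN).2 (ε / 2) (half_pos hε), eventually_ge_atTop 1]
    with n hsmall hn
  have hn' : (0 : ℝ) < n := by exact_mod_cast hn
  calc weightedMax a n / n ≤ (weightedMax a N + n * a N) / n :=
        div_le_div_of_nonneg_right (weightedMax_le_add_mul ha ha0 N n) hn'.le
    _ = weightedMax a N / n + a N := by field_simp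
    _ < ε := by linarith

end WeightedMax

theorem stmt0_general (c : ℕ → ℝ)
    (hsub : Tendsto (fun n => Real.log (c n) / n) atTop (nhds 0)) :
    ∃ s : ℕ → ℝ,
      (∀ n, 1 ≤ n → c n ≤ s n) ∧
      (∀ n m, 1 ≤ n → n ≤ m → s n ≤ s m) ∧
      (∀ n, 1 ≤ n → Real.log (s (n + 1)) / (n + 1) ≤ Real.log (s n) / n) ∧
      Tendsto (fun n => Real.log (s n) / n) atTop (nhds 0) := by
  set a := tailSup fun n => Real.log (c n) / n
  have ha : Antitone a := antitone_tailSup hsub.bddAbove_range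
  have ha_lim : Tendsto a atTop (𝓝 0) := tendsto_tailSup hsub
  have ha0 : 0 ≤ a := fun n => ha.le_of_tendsto ha_lim n
  refine ⟨fun n => Real.exp (weightedMax a n), fun n hn => ?_,
    fun n m _ hnm => Real.exp_le_exp.2 (monotone_weightedMax hnm), fun n hn => ?_, ?_⟩
  · have hlog : Real.log (c n) ≤ n * a n := by
      rw [← div_le_iff₀' (by exact_mod_cast hn)]
      exact le_tailSup_of_le hsub.bddAbove_range le_rfl
    exact (Real.le_exp_log _).trans
      (Real.exp_le_exp.2 (hlog.trans (natCast_mul_le_weightedMax le_rfl)))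
  · simpa only [Real.log_exp, Nat.cast_succ] using weightedMax_div_succ_le ha ha0 hn
  · simpa only [Real.log_exp] using tendsto_weightedMax_div ha ha0 ha_lim

/-- Given a sequence `(c n)` with `c n ≥ e` for `n ≥ 1` and
`(log c n)/n → 0`, there is a sequence `(s n)` with `s n ≥ c n`, `(s n)`
monotone increasing, and `((log s n)/n)` monotone decreasing with limit `0`. -/
theorem stmt0 (c : ℕ → ℝ) (hc : ∀ n, 1 ≤ n → Real.exp 1 ≤ c n)
    (hsub : Tendsto (fun n => Real.log (c n) / n) atTop (nhds 0)) :
    ∃ s : ℕ → ℝ,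
      (∀ n, 1 ≤ n → c n ≤ s n) ∧
      (∀ n m, 1 ≤ n → n ≤ m → s n ≤ s m) ∧
      (∀ n, 1 ≤ n → Real.log (s (n + 1)) / (n + 1) ≤ Real.log (s n) / n) ∧
      Tendsto (fun n => Real.log (s n) / n) atTop (nhds 0) :=
  stmt0_general c hsub
end

section
/- Let (c_n)_{n≥1} be a sequence of real numbers with c_n ≥ 1 for all n and (log c_n)/n → 0 as n → ∞. Then there exists a regular sequence (s_n)_{n≥1} with subexponential growth such that s_n ≥ c_n for all n. -/
open Filter Real Finset

lemma runsup_tendsto (u : ℕ → ℝ) (hu : ∀ n, 0 ≤ u n)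
    (h : Tendsto (fun n => u n / n) atTop (nhds 0)) :
    Tendsto (fun n => (Finset.range (n+1)).sup' Finset.nonempty_range_add_one u / n)
      atTop (nhds 0) := by
  set U : ℕ → ℝ := fun n => (Finset.range (n+1)).sup' Finset.nonempty_range_add_one u with hU
  have hU0 : ∀ n, 0 ≤ U n := fun n =>
    le_trans (hu n) (Finset.le_sup' u (Finset.self_mem_range_succ n))
  rw [Metric.tendsto_atTop]
  intro ε hε
  obtain ⟨N₀, hN₀⟩ := (Metric.tendsto_atTop.1 h) (ε/2) (by linarith)
  set N₁ := max N₀ 1 with hN₁def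
  have htail : ∀ k, N₁ ≤ k → u k ≤ ε/2 * k := by
    intro k hk
    have hk0 : 0 < k := lt_of_lt_of_le one_pos (le_trans (le_max_right _ _) hk)
    have := hN₀ k (le_trans (le_max_left _ _) hk)
    rw [Real.dist_eq, sub_zero, abs_of_nonneg (div_nonneg (hu k) (Nat.cast_nonneg k))] at this
    have hkR : (0:ℝ) < k := by exact_mod_cast hk0
    calc u k = u k / k * k := by field_simp
    _ ≤ ε/2 * k := mul_le_mul_of_nonneg_right (le_of_lt this) (le_of_lt hkR)
  set M := U N₁ with hM
  have hM0 : 0 ≤ M := hU0 N₁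
  set N := max N₁ (⌈M / (ε/2)⌉₊ + 1) with hNdef
  refine ⟨N, fun n hn => ?_⟩
  have hnN₁ : N₁ ≤ n := le_trans (le_max_left _ _) hn
  have hn1 : 1 ≤ n := le_trans (le_max_right _ _) hnN₁
  have hnR : (0:ℝ) < n := by exact_mod_cast lt_of_lt_of_le one_pos hn1
  have hMn : M / n < ε/2 := by
    rw [div_lt_iff₀ hnR]
    have h1 : ((⌈M / (ε/2)⌉₊ + 1 : ℕ) : ℝ) ≤ n := by
      exact_mod_cast le_trans (le_max_right _ _) hn
    have h2 : M / (ε/2) < n := by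
      calc M / (ε/2) ≤ ⌈M / (ε/2)⌉₊ := Nat.le_ceil _
      _ < (⌈M / (ε/2)⌉₊ : ℝ) + 1 := by linarith
      _ ≤ n := by push_cast at h1 ⊢; linarith
    calc M = M / (ε/2) * (ε/2) := by field_simp
    _ < n * (ε/2) := mul_lt_mul_of_pos_right h2 (by linarith)
    _ = ε/2 * n := by ring
  have hUn : U n ≤ M + ε/2 * n := by
    apply Finset.sup'_le
    intro k hk
    rcases le_or_gt k N₁ with hkN | hkN
    · have : u k ≤ M := Finset.le_sup' u (Finset.mem_range_succ_iff.2 hkN)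
      nlinarith [mul_nonneg (le_of_lt (half_pos hε)) (Nat.cast_nonneg (α := ℝ) n)]
    · have h1 : u k ≤ ε/2 * k := htail k (le_of_lt hkN)
      have h2 : (k:ℝ) ≤ n := by exact_mod_cast Finset.mem_range_succ_iff.1 hk
      nlinarith
  rw [Real.dist_eq, sub_zero, abs_of_nonneg (div_nonneg (hU0 n) (le_of_lt hnR))]
  calc U n / n ≤ (M + ε/2 * n) / n := by gcongr
  _ = M / n + ε/2 := by rw [add_div, mul_div_assoc, div_self (ne_of_gt hnR), mul_one]
  _ < ε := by linarith


/-- A sequence `(s n)` (indexed from 1) is a regular sequence with subexponential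
growth if: (i) `s n ≥ e` for all `n ≥ 1`, (ii) `(s n)` is monotone increasing, and
(iii) `((log s n)/n)` is monotone decreasing with limit `0`. -/
def IsRegularSubexp (s : ℕ → ℝ) : Prop :=
  (∀ n, 1 ≤ n → Real.exp 1 ≤ s n) ∧
  (∀ n m, 1 ≤ n → n ≤ m → s n ≤ s m) ∧
  (∀ n, 1 ≤ n → Real.log (s (n + 1)) / (n + 1) ≤ Real.log (s n) / n) ∧
  Filter.Tendsto (fun n => Real.log (s n) / n) Filter.atTop (nhds 0)

/-- Given `(c n)` with `c n ≥ 1` (for `n ≥ 1`) and `(log c n)/n → 0`,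
there is a regular sequence `(s n)` with subexponential growth with `s n ≥ c n`. -/
theorem stmt1 (c : ℕ → ℝ) (hc : ∀ n, 1 ≤ n → 1 ≤ c n)
    (hsub : Tendsto (fun n => Real.log (c n) / n) atTop (nhds 0)) :
    ∃ s : ℕ → ℝ, IsRegularSubexp s ∧ ∀ n, 1 ≤ n → c n ≤ s n := by
  unfold IsRegularSubexp
  -- the majorant g
  set g : ℕ → ℝ := fun n => max 1 (Real.log (c n)) with hgdef
  have hg1 : ∀ n, 1 ≤ g n := fun n => le_max_left _ _
  have hg0 : ∀ n, 0 ≤ g n := fun n => le_trans zero_le_one (hg1 n)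
  have hgd : Tendsto (fun n => g n / n) atTop (nhds 0) := by
    have h1 : Tendsto (fun n : ℕ => max ((1:ℝ) / n) (Real.log (c n) / n)) atTop (nhds 0) := by
      have := (tendsto_one_div_atTop_nhds_zero_nat).max hsub
      simpa using this
    refine Tendsto.congr' ?_ h1
    filter_upwards [eventually_gt_atTop 0] with n hn
    have hnR : (0:ℝ) < n := by exact_mod_cast hn
    rw [hgdef]
    simp only []
    rw [div_eq_mul_inv, div_eq_mul_inv, ← max_mul_of_nonneg _ _ (le_of_lt (inv_pos.2 hnR)),
      ← div_eq_mul_inv]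
  -- running max U
  set U : ℕ → ℝ := fun n => (Finset.range (n+1)).sup' Finset.nonempty_range_add_one g with hUdef
  have hUg : ∀ n, g n ≤ U n := fun n => Finset.le_sup' g (Finset.self_mem_range_succ n)
  have hU1 : ∀ n, 1 ≤ U n := fun n => le_trans (hg1 n) (hUg n)
  have hU0 : ∀ n, 0 ≤ U n := fun n => le_trans zero_le_one (hU1 n)
  have hUmono : ∀ n m, n ≤ m → U n ≤ U m := by
    intro n m hnm
    exact Finset.sup'_le _ _ fun k hk =>
      Finset.le_sup' g (Finset.mem_range_succ_iff.2
        (le_trans (Finset.mem_range_succ_iff.1 hk) hnm))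
  have hUd : Tendsto (fun n => U n / n) atTop (nhds 0) := runsup_tendsto g hg0 hgd
  have hq0 : ∀ m, 0 ≤ U m / m := fun m => div_nonneg (hU0 m) (Nat.cast_nonneg m)
  -- tail sups t
  have hbdd : ∀ n : ℕ, BddAbove ((fun m => U m / m) '' Set.Ici n) := by
    intro n
    exact (hUd.bddAbove_range).mono (Set.image_subset_range _ _)
  have hne : ∀ n : ℕ, ((fun m => U m / m) '' Set.Ici n).Nonempty :=
    fun n => ⟨U n / n, ⟨n, le_refl n, rfl⟩⟩
  set t : ℕ → ℝ := fun n => sSup ((fun m => U m / m) '' Set.Ici n) with htdef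
  have hle : ∀ n m, n ≤ m → U m / m ≤ t n := fun n m hm =>
    le_csSup (hbdd n) ⟨m, hm, rfl⟩
  have hts : ∀ (n : ℕ) (x : ℝ), (∀ m, n ≤ m → U m / m ≤ x) → t n ≤ x := by
    intro n x hx
    exact csSup_le (hne n) (by rintro y ⟨m, hm, rfl⟩; exact hx m hm)
  have ht0 : ∀ n, 0 ≤ t n := fun n => le_trans (hq0 n) (hle n n le_rfl)
  have htanti : ∀ n, t (n+1) ≤ t n := by
    intro n
    exact hts (n+1) (t n) (fun m hm => hle n m (le_trans (Nat.le_succ n) hm))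
  have httend : Tendsto t atTop (nhds 0) := by
    rw [Metric.tendsto_atTop]
    intro ε hε
    obtain ⟨N, hN⟩ := (Metric.tendsto_atTop.1 hUd) (ε/2) (by linarith)
    refine ⟨N, fun n hn => ?_⟩
    have h1 : t n ≤ ε/2 := by
      apply hts
      intro m hm
      have := hN m (le_trans hn hm)
      rw [Real.dist_eq, sub_zero, abs_of_nonneg (hq0 m)] at this
      linarith
    rw [Real.dist_eq, sub_zero, abs_of_nonneg (ht0 n)]
    linarith
  -- n * t n is monotone (for n ≥ 1)
  have hkey : ∀ n : ℕ, 1 ≤ n → (n:ℝ) * t n ≤ (n+1) * t (n+1) := by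
    intro n hn
    have hnR : (0:ℝ) < n := by exact_mod_cast hn
    rw [mul_comm, ← le_div_iff₀ hnR]
    apply hts
    intro m hm
    rcases eq_or_lt_of_le hm with h | h
    · subst h
      rw [le_div_iff₀ hnR, mul_comm (U n / n)]
      have h1 : (n:ℝ) * (U n / n) = U n := by field_simp
      rw [h1]
      calc U n ≤ U (n+1) := hUmono n (n+1) (Nat.le_succ n)
      _ = ((n:ℝ)+1) * (U (n+1) / (n+1)) := by field_simp
      _ ≤ ((n:ℝ)+1) * t (n+1) := by
          apply mul_le_mul_of_nonneg_left _ (by positivity)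
          exact_mod_cast hle (n+1) (n+1) le_rfl
    · rw [le_div_iff₀ hnR, mul_comm (U m / m)]
      have h2 : U m / m ≤ t (n+1) := by
        have := hle (n+1) m h
        exact_mod_cast this
      calc (n:ℝ) * (U m / m) ≤ ((n:ℝ)+1) * (U m / m) := by nlinarith [hq0 m]
      _ ≤ ((n:ℝ)+1) * t (n+1) := by nlinarith [hq0 m]
  -- monotone transitively
  have hmono : ∀ n m : ℕ, 1 ≤ n → n ≤ m → (n:ℝ) * t n ≤ (m:ℝ) * t m := by
    intro n m hn hnm
    induction m, hnm using Nat.le_induction with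
    | base => exact le_rfl
    | succ m hm ih =>
        calc (n:ℝ) * t n ≤ (m:ℝ) * t m := ih
        _ ≤ ((m:ℝ)+1) * t (m+1) := hkey m (le_trans hn hm)
        _ = ((m+1 : ℕ):ℝ) * t (m+1) := by push_cast; ring
  -- the sequence s
  refine ⟨fun n => Real.exp (n * t n), ⟨?_, ?_, ?_, ?_⟩, ?_⟩
  · -- s n ≥ e
    intro n hn
    rw [Real.exp_le_exp]
    have hnR : (0:ℝ) < n := by exact_mod_cast hn
    have h1 : 1/(n:ℝ) ≤ U n / n := by gcongr; exact hU1 n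
    have h2 : 1/(n:ℝ) ≤ t n := le_trans h1 (hle n n le_rfl)
    calc (1:ℝ) = (n:ℝ) * (1/n) := by field_simp
    _ ≤ (n:ℝ) * t n := by apply mul_le_mul_of_nonneg_left h2 (le_of_lt hnR)
  · -- monotone
    intro n m hn hnm
    rw [Real.exp_le_exp]
    exact hmono n m hn hnm
  · -- log s (n+1)/(n+1) ≤ log s n / n
    intro n hn
    have hnR : (0:ℝ) < n := by exact_mod_cast hn
    have hn1R : (0:ℝ) < (n:ℝ) + 1 := by positivity
    rw [Real.log_exp, Real.log_exp]
    push_cast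
    rw [mul_div_cancel_left₀ _ (ne_of_gt hn1R), mul_div_cancel_left₀ _ (ne_of_gt hnR)]
    exact htanti n
  · -- tendsto
    have heq : (fun n : ℕ => Real.log (Real.exp (n * t n)) / n) =ᶠ[atTop] t := by
      filter_upwards [eventually_gt_atTop 0] with n hn
      have hnR : (0:ℝ) < n := by exact_mod_cast hn
      rw [Real.log_exp, mul_comm, mul_div_assoc, div_self (ne_of_gt hnR), mul_one]
    exact Tendsto.congr' heq.symm httend
  · -- c n ≤ s n
    intro n hn
    have hnR : (0:ℝ) < n := by exact_mod_cast hn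
    have h1 : Real.log (c n) ≤ (n:ℝ) * t n := by
      calc Real.log (c n) ≤ g n := le_max_right _ _
      _ ≤ U n := hUg n
      _ = (n:ℝ) * (U n / n) := by field_simp
      _ ≤ (n:ℝ) * t n := by
          apply mul_le_mul_of_nonneg_left (hle n n le_rfl) (le_of_lt hnR)
    calc c n = Real.exp (Real.log (c n)) := by
          rw [Real.exp_log (lt_of_lt_of_le zero_lt_one (hc n hn))]
    _ ≤ Real.exp ((n:ℝ) * t n) := Real.exp_le_exp.2 h1
end

section
/- Let γ = (γ_s)_{s≥1} be a sequence of reals with 0 < γ_s < 1/4, and let r_s, P_{2^s}, E_s be as in the weakly equilibrium Cantor set construction. Then E_{s+1} ⊆ E_s for every s ≥ 1, and E_s ⊆ [0,1] for every s ≥ 1. -/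
open Polynomial

/-- In the weakly equilibrium Cantor set construction (with
`0 < γ s < 1/4`, `r 0 = 1`, `r s = γ s · r (s-1)²`, `P 1 = X(X-1)`,
`P (s+1) = P s · (P s + r s)`, `E s = {x : -r s ≤ P s (x) ≤ 0}`), one has
`E (s+1) ⊆ E s` for every `s ≥ 1`, and `E s ⊆ [0,1]` for every `s ≥ 1`. -/
theorem stmt15 (γ : ℕ → ℝ) (hγ : ∀ s, 1 ≤ s → 0 < γ s ∧ γ s < 1 / 4)
    (r : ℕ → ℝ) (hr0 : r 0 = 1)
    (hr : ∀ s, 1 ≤ s → r s = γ s * (r (s - 1)) ^ 2)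
    (P : ℕ → Polynomial ℝ) (hP1 : P 1 = X * (X - 1))
    (hP : ∀ s, 1 ≤ s → P (s + 1) = P s * (P s + C (r s)))
    (E : ℕ → Set ℝ)
    (hE : ∀ s, 1 ≤ s → E s = {x : ℝ | -(r s) ≤ (P s).eval x ∧ (P s).eval x ≤ 0}) :
    (∀ s, 1 ≤ s → E (s + 1) ⊆ E s) ∧
    (∀ s, 1 ≤ s → E s ⊆ Set.Icc (0 : ℝ) 1) := by
  have hrpos : ∀ s, 0 < r s := by
    intro s
    induction s with
    | zero => simp [hr0]
    | succ n ih =>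
      have h1 : 1 ≤ n + 1 := Nat.le_add_left 1 n
      rw [hr (n + 1) h1]
      simp only [Nat.add_sub_cancel]
      exact mul_pos (hγ (n + 1) h1).1 (pow_pos ih 2)
  have hsub : ∀ s, 1 ≤ s → E (s + 1) ⊆ E s := by
    intro s hs x hx
    rw [hE (s + 1) (by omega)] at hx
    rw [hE s hs]
    obtain ⟨h1, h2⟩ := hx
    rw [hP s hs] at h2
    simp only [Polynomial.eval_mul, Polynomial.eval_add, Polynomial.eval_C] at h2
    have hr' := hrpos s
    set y := (P s).eval x with hy
    constructor
    · nlinarith [sq_nonneg (y + r s), sq_nonneg y]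
    · nlinarith [sq_nonneg (y + r s), sq_nonneg y]
  refine ⟨hsub, ?_⟩
  intro s hs
  induction s with
  | zero => omega
  | succ n ih =>
    rcases Nat.lt_or_ge n 1 with h | h
    · interval_cases n
      intro x hx
      rw [hE 1 le_rfl] at hx
      obtain ⟨h1, h2⟩ := hx
      rw [hP1] at h2
      simp only [Polynomial.eval_mul, Polynomial.eval_sub, Polynomial.eval_X,
        Polynomial.eval_one] at h2
      constructor
      · nlinarith
      · nlinarith
    · exact (hsub n h).trans (ih h)
end

section
/- Let γ = (γ_s)_{s≥1} be a sequence of reals with 0 < γ_s < 1/4, and let r_s, P_{2^s}, E_s, K(γ) be as in the weakly equilibrium Cantor set construction. Let s ≥ 1 and let x₀ ∈ (0,1) with x₀ ∉ E_s. Then P_{2^s}(x₀) + r_s/2 ≠ 0, and the polynomial R(x) := (P_{2^s}(x) + r_s/2) / (P_{2^s}(x₀) + r_s/2) satisfies R(x₀) = 1, deg R ≤ 2^s, and sup_{x ∈ K(γ)} |R(x)| ≤ sup_{x ∈ K(γ)} |Q(x)| for every real polynomial Q of degree at most 2^s with Q(x₀) = 1. -/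
open Polynomial

/-!
Put `H_t = P_t + r_t / 2`. Then `H_{t+1} = H_t ^ 2 - (r_t ^ 2 / 4 - r_{t+1} / 2)` and
`E_t = {|H_t| ≤ r_t / 2}`. Since `r_{t+1} < r_t ^ 2 / 4`, every interval on which `H_t` runs
monotonically between `r_t / 2` and `-r_t / 2` contains two disjoint intervals on which `H_{t+1}`
does the same between `±r_{t+1} / 2`; hence `E_s` contains `2 ^ s` disjoint such bands. Their
endpoints, where `|H_s| = r_s / 2`, lie in `K`, and there `R = H_s / H_s(x₀)` attains its sup norm
on `K` with alternating signs. If `Q` had a smaller sup norm on `K`, `R - Q` would change sign on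
every band and also vanish at `x₀ ∉ E_s`: `2 ^ s + 1` zeros in degree at most `2 ^ s`.
-/

open Set Function

/-- On a band `[a, b]`, `f` runs monotonically from `m` to `-m` or from `-m` to `m`;
the sign `ε` records which. -/
def IsBand (f : ℝ → ℝ) (m a b : ℝ) : Prop :=
  a < b ∧ ∃ ε : ℝ, |ε| = 1 ∧ ε * f a = m ∧ ε * f b = -m ∧
    AntitoneOn (fun x => ε * f x) (Icc a b)

namespace IsBand

variable {f : ℝ → ℝ} {m a b : ℝ}

lemma abs_le (h : IsBand f m a b) {x : ℝ} (hx : x ∈ Icc a b) : |f x| ≤ m := by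
  obtain ⟨hab, ε, hε, ha, hb, hanti⟩ := h
  have hxa : ε * f x ≤ ε * f a := hanti ⟨le_rfl, hab.le⟩ hx hx.1
  have hbx : ε * f b ≤ ε * f x := hanti hx ⟨hab.le, le_rfl⟩ hx.2
  rw [← one_mul |f x|, ← hε, ← abs_mul, _root_.abs_le]
  constructor <;> linarith

lemma nonneg (h : IsBand f m a b) : 0 ≤ m := by
  obtain ⟨hab, ε, -, ha, hb, hanti⟩ := h
  have := hanti ⟨le_rfl, hab.le⟩ ⟨hab.le, le_rfl⟩ hab.le
  simp only [ha, hb] at this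
  linarith

lemma abs_left (h : IsBand f m a b) : |f a| = m := by
  have hm := h.nonneg
  obtain ⟨-, ε, hε, ha, -, -⟩ := h
  rw [← one_mul |f a|, ← hε, ← abs_mul, ha, abs_of_nonneg hm]

lemma right_eq_neg_left (h : IsBand f m a b) : f b = -f a := by
  obtain ⟨-, ε, hε, ha, hb, -⟩ := h
  have hε0 : ε ≠ 0 := by rintro rfl; simp at hε
  exact mul_left_cancel₀ hε0 (by linear_combination hb + ha)

lemma const_mul (h : IsBand f m a b) {c : ℝ} (hc : c ≠ 0) :
    IsBand (fun x => c * f x) (|c| * m) a b := by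
  obtain ⟨hab, ε, hε, ha, hb, hanti⟩ := h
  have hscale : ∀ x, ε * |c| / c * (c * f x) = |c| * (ε * f x) := fun x => by
    field_simp
  refine ⟨hab, ε * |c| / c, ?_, ?_, ?_, ?_⟩
  · rw [abs_div, abs_mul, abs_abs, hε, one_mul, div_self (abs_ne_zero.2 hc)]
  · rw [hscale, ha]
  · rw [hscale, hb, mul_neg]
  · intro x hx y hy hxy
    simp only [hscale]
    exact mul_le_mul_of_nonneg_left (hanti hx hy hxy) (abs_nonneg c)

/-- Writing `g = ε f`, the new function is `g ^ 2 - (m ^ 2 - m')`; it takes the value `-m'`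
where `g = ±τ` with `τ ^ 2 = m ^ 2 - 2 m'`, and is monotone where `g` keeps a sign. -/
lemma exists_sq_sub (h : IsBand f m a b) (hf : ContinuousOn f (Icc a b)) {m' : ℝ}
    (hm' : 0 < m') (hmm' : 2 * m' < m ^ 2) :
    ∃ c d, c < d ∧ IsBand (fun x => f x ^ 2 - (m ^ 2 - m')) m' a c ∧
      IsBand (fun x => f x ^ 2 - (m ^ 2 - m')) m' d b := by
  have hm := h.nonneg
  obtain ⟨hab, ε, hε, ha, hb, hanti⟩ := h
  set g : ℝ → ℝ := fun x => ε * f x with hg_def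
  have hga : g a = m := ha
  have hgb : g b = -m := hb
  have hsq : ∀ x, f x ^ 2 = g x ^ 2 := fun x => by
    rw [hg_def, mul_pow, ← sq_abs ε, hε, one_pow, one_mul]
  have hg : ContinuousOn g (Icc a b) := continuousOn_const.mul hf
  set τ := √(m ^ 2 - 2 * m')
  have hτsq : τ ^ 2 = m ^ 2 - 2 * m' := Real.sq_sqrt (by linarith)
  have hτ : 0 < τ := Real.sqrt_pos.2 (by linarith)
  have hτm : τ < m := lt_of_pow_lt_pow_left₀ 2 hm (by linarith)
  obtain ⟨c, hc, hgc⟩ := intermediate_value_Icc' hab.le hg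
    (show τ ∈ Icc (g b) (g a) by constructor <;> linarith)
  obtain ⟨d, hd, hgd⟩ := intermediate_value_Icc' hab.le hg
    (show -τ ∈ Icc (g b) (g a) by constructor <;> linarith)
  have hac : a < c := hc.1.lt_of_ne (by rintro rfl; linarith)
  have hdb : d < b := hd.2.lt_of_ne (by rintro rfl; linarith)
  have hcd : c < d := lt_of_not_ge fun hdc => by
    have := hanti hd hc hdc
    linarith
  refine ⟨c, d, hcd, ⟨hac, 1, abs_one, ?_, ?_, ?_⟩, ⟨hdb, -1, by simp, ?_, ?_, ?_⟩⟩
  · simp only [hsq, hga]; ring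
  · simp only [hsq, hgc]; linarith
  · intro x hx y hy hxy
    have hyx : g y ≤ g x := hanti ⟨hx.1, hx.2.trans (hcd.trans hdb).le⟩
      ⟨hy.1, hy.2.trans (hcd.trans hdb).le⟩ hxy
    have hcy : τ ≤ g y := hgc ▸ hanti ⟨hy.1, hy.2.trans (hcd.trans hdb).le⟩ hc hy.2
    simp only [hsq]
    nlinarith
  · simp only [hsq, hgd]; linarith
  · simp only [hsq, hgb]; ring
  · intro x hx y hy hxy
    have hyx : g y ≤ g x := hanti ⟨(hac.trans hcd).le.trans hx.1, hx.2⟩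
      ⟨(hac.trans hcd).le.trans hy.1, hy.2⟩ hxy
    have hxd : g x ≤ -τ := hgd ▸ hanti hd ⟨(hac.trans hcd).le.trans hx.1, hx.2⟩ hx.1
    simp only [hsq]
    nlinarith

end IsBand

def HasBands (f : ℝ → ℝ) (m : ℝ) (ι : Type*) : Prop :=
  ∃ a b : ι → ℝ, (∀ i, IsBand f m (a i) (b i)) ∧ Pairwise (Disjoint on fun i => Icc (a i) (b i))

namespace HasBands

variable {f : ℝ → ℝ} {m : ℝ} {ι κ : Type*}

lemma comp_injective (h : HasBands f m ι) {e : κ → ι} (he : Injective e) : HasBands f m κ := by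
  obtain ⟨a, b, hband, hdisj⟩ := h
  exact ⟨a ∘ e, b ∘ e, fun k => hband (e k), hdisj.comp_of_injective he⟩

lemma const_mul (h : HasBands f m ι) {c : ℝ} (hc : c ≠ 0) :
    HasBands (fun x => c * f x) (|c| * m) ι := by
  obtain ⟨a, b, hband, hdisj⟩ := h
  exact ⟨a, b, fun i => (hband i).const_mul hc, hdisj⟩

lemma sq_sub (h : HasBands f m ι) (hf : Continuous f) {m' : ℝ} (hm' : 0 < m')
    (hmm' : 2 * m' < m ^ 2) : HasBands (fun x => f x ^ 2 - (m ^ 2 - m')) m' (Bool × ι) := by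
  obtain ⟨a, b, hband, hdisj⟩ := h
  choose c d hcd hleft hright using fun i => (hband i).exists_sq_sub hf.continuousOn hm' hmm'
  have hsub : ∀ (β : Bool) i,
      Icc (if β then a i else d i) (if β then c i else b i) ⊆ Icc (a i) (b i) := by
    rintro (_ | _) i
    · exact Icc_subset_Icc ((hleft i).1.le.trans (hcd i).le) le_rfl
    · exact Icc_subset_Icc le_rfl ((hcd i).le.trans (hright i).1.le)
  refine ⟨fun p => if p.1 then a p.2 else d p.2, fun p => if p.1 then c p.2 else b p.2,
    fun ⟨β, i⟩ => by cases β <;> simp [hleft, hright], ?_⟩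
  rintro ⟨β, i⟩ ⟨β', j⟩ hne
  by_cases hij : i = j
  · subst hij
    have hsibling : Disjoint (Icc (a i) (c i)) (Icc (d i) (b i)) :=
      disjoint_left.2 fun x hx hx' => by linarith [hx.2, hx'.1, hcd i]
    cases β <;> cases β' <;> simp_all [onFun, hsibling.symm]
  · exact (hdisj hij).mono (hsub β i) (hsub β' j)

end HasBands

lemma exists_mem_Icc_eq_zero_of_mul_nonpos {f : ℝ → ℝ} {a b : ℝ} (hab : a ≤ b)
    (hf : ContinuousOn f (Icc a b)) (h : f a * f b ≤ 0) : ∃ z ∈ Icc a b, f z = 0 := by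
  rw [← uIcc_of_le hab] at hf ⊢
  refine intermediate_value_uIcc hf ?_
  rcases mul_nonpos_iff.1 h with ⟨ha, hb⟩ | ⟨ha, hb⟩
  · exact mem_uIcc_of_ge hb ha
  · exact mem_uIcc_of_le ha hb

lemma Polynomial.card_add_one_le_natDegree {R : Type*} [CommRing R] [IsDomain R] {ι : Type*}
    [Fintype ι] {p : R[X]} (hp : p ≠ 0) {z : ι → R} (hz : Injective z)
    (hroot : ∀ i, p.IsRoot (z i)) {x₀ : R} (hx₀ : p.IsRoot x₀) (hx₀z : x₀ ∉ range z) :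
    Fintype.card ι + 1 ≤ p.natDegree := by
  classical
  have hnot : x₀ ∉ Finset.univ.map ⟨z, hz⟩ := by simpa using hx₀z
  calc Fintype.card ι + 1 = (insert x₀ (Finset.univ.map ⟨z, hz⟩)).card := by
        rw [Finset.card_insert_of_notMem hnot, Finset.card_map, Finset.card_univ]
    _ ≤ p.natDegree := card_le_degree_of_subset_roots fun x hx => by
        rcases Finset.mem_insert.1 hx with rfl | hx
        · exact (mem_roots hp).2 hx₀
        · obtain ⟨i, -, rfl⟩ := Finset.mem_map.1 hx
          exact (mem_roots hp).2 (hroot i)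

/-- Chebyshev alternation: each band carries a zero of `R - Q`, and `x₀` is one more. -/
theorem exists_abs_eval_eq_le_abs_eval {R Q : ℝ[X]} {σ x₀ : ℝ} {ι : Type*} [Fintype ι]
    [Nonempty ι] (hbands : HasBands R.eval σ ι) (hR : R.natDegree ≤ Fintype.card ι)
    (hQ : Q.natDegree ≤ Fintype.card ι) (hx₀ : σ < |R.eval x₀|) (hRQ : R.eval x₀ = Q.eval x₀) :
    ∃ x, |R.eval x| = σ ∧ σ ≤ |Q.eval x| := by
  by_contra! hlt
  obtain ⟨a, b, hband, hdisj⟩ := hbands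
  have hsign : ∀ i, (R - Q).eval (a i) * (R - Q).eval (b i) < 0 := by
    intro i
    have hRa := (hband i).abs_left
    have hQa := abs_lt.1 (hlt _ hRa)
    have hQb := abs_lt.1 (hlt (b i) (by rw [(hband i).right_eq_neg_left, abs_neg, hRa]))
    rw [eval_sub, eval_sub, (hband i).right_eq_neg_left]
    rcases abs_cases (R.eval (a i)) with ⟨h, -⟩ | ⟨h, -⟩ <;> nlinarith
  choose z hz hzroot using fun i => exists_mem_Icc_eq_zero_of_mul_nonpos (hband i).1.le
    (R - Q).continuous.continuousOn (hsign i).le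
  have hz_inj : Injective z := fun i j hij => by
    by_contra hne
    exact disjoint_left.1 (hdisj hne) (hz i) (hij ▸ hz j)
  have hx₀z : x₀ ∉ range z := by
    rintro ⟨i, rfl⟩
    exact (hband i).abs_le (hz i) |>.not_gt hx₀
  have hRQ0 : R - Q ≠ 0 := fun h0 => by
    simpa [h0] using hsign (Classical.arbitrary ι)
  have := card_add_one_le_natDegree hRQ0 hz_inj hzroot (by simp [IsRoot, hRQ]) hx₀z
  have := (natDegree_sub_le R Q).trans (max_le hR hQ)
  omega

theorem sSup_abs_eval_C_inv_mul_le {H Q : ℝ[X]} {m x₀ : ℝ} {S : Set ℝ} {ι : Type*} [Fintype ι]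
    [Nonempty ι] (hbands : HasBands H.eval m ι) (hH : H.natDegree ≤ Fintype.card ι)
    (hQ : Q.natDegree ≤ Fintype.card ι) (hS : ∀ x, |H.eval x| = m → x ∈ S)
    (hSH : ∀ x ∈ S, |H.eval x| ≤ m) (hSbdd : Bornology.IsBounded S)
    (hx₀ : m < |H.eval x₀|) (hQx₀ : Q.eval x₀ = 1) :
    sSup ((fun x => |(C (H.eval x₀)⁻¹ * H).eval x|) '' S) ≤
      sSup ((fun x => |Q.eval x|) '' S) := by
  set d := H.eval x₀
  have hm : 0 ≤ m := by
    obtain ⟨a, b, hband, -⟩ := hbands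
    exact (hband (Classical.arbitrary ι)).nonneg
  have hd : 0 < |d| := hm.trans_lt hx₀
  have hR : ∀ x, (C d⁻¹ * H).eval x = d⁻¹ * H.eval x := fun x => by simp
  have hRx₀ : (C d⁻¹ * H).eval x₀ = 1 := by rw [hR, inv_mul_cancel₀ (abs_pos.1 hd)]
  have hRbands : HasBands (C d⁻¹ * H).eval (|d⁻¹| * m) ι := by
    simpa only [hR] using hbands.const_mul (inv_ne_zero (abs_pos.1 hd))
  obtain ⟨x, hRx, hQx⟩ := exists_abs_eval_eq_le_abs_eval
    hRbands ((natDegree_C_mul_le _ _).trans hH) hQ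
    (by rwa [hRx₀, abs_one, abs_inv, inv_mul_lt_iff₀ hd, mul_one]) (hRx₀.trans hQx₀.symm)
  have hxS : x ∈ S := hS x <| by
    rw [hR, abs_mul] at hRx
    exact mul_left_cancel₀ (abs_ne_zero.2 (inv_ne_zero (abs_pos.1 hd))) hRx
  have hQbdd : BddAbove ((fun x => |Q.eval x|) '' S) :=
    (hSbdd.isCompact_closure.image (continuous_abs.comp Q.continuous)).bddAbove.mono
      (image_mono subset_closure)
  calc sSup ((fun x => |(C d⁻¹ * H).eval x|) '' S) ≤ |d⁻¹| * m := by
        refine Real.sSup_le ?_ (by positivity)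
        rintro _ ⟨y, hy, rfl⟩
        simp only [hR, abs_mul]
        exact mul_le_mul_of_nonneg_left (hSH y hy) (abs_nonneg _)
    _ ≤ |Q.eval x| := hQx
    _ ≤ sSup ((fun x => |Q.eval x|) '' S) := le_csSup hQbdd ⟨x, hxS, rfl⟩

/-- The recursion `P_{t+1} = P_t (P_t + r_t)` in centred form `h_t = P_t + r_t / 2`,
`m_t = r_t / 2`. -/
def IsQuadraticTower (h : ℕ → ℝ → ℝ) (m : ℕ → ℝ) : Prop :=
  ∀ t x, h (t + 1) x = h t x ^ 2 - (m t ^ 2 - m (t + 1))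

namespace IsQuadraticTower

variable {h : ℕ → ℝ → ℝ} {m : ℕ → ℝ}

lemma abs_le_of_abs_le_succ (hh : IsQuadraticTower h m) {t : ℕ} {x : ℝ} (hm : 0 ≤ m t)
    (hx : |h (t + 1) x| ≤ m (t + 1)) : |h t x| ≤ m t := by
  rw [hh] at hx
  exact abs_le_of_sq_le_sq (by linarith [(abs_le.1 hx).2]) hm

lemma abs_le_of_le_of_abs_le (hh : IsQuadraticTower h m) (hm : ∀ t, 0 ≤ m t) {t u : ℕ} {x : ℝ}
    (htu : t ≤ u) (hx : |h u x| ≤ m u) : |h t x| ≤ m t := by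
  induction u, htu using Nat.le_induction with
  | base => exact hx
  | succ u _ ih => exact ih (hh.abs_le_of_abs_le_succ (hm u) hx)

lemma abs_eq_of_le_of_abs_eq (hh : IsQuadraticTower h m) (hm : ∀ t, 0 ≤ m t) {t u : ℕ} {x : ℝ}
    (htu : t ≤ u) (hx : |h t x| = m t) : |h u x| = m u := by
  induction u, htu using Nat.le_induction with
  | base => exact hx
  | succ u _ ih => rw [hh, ← sq_abs, ih, sub_sub_cancel, abs_of_nonneg (hm _)]

lemma forall_abs_le_of_abs_eq (hh : IsQuadraticTower h m) (hm : ∀ t, 0 ≤ m t) {s : ℕ} {x : ℝ}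
    (hx : |h s x| = m s) (t : ℕ) : |h t x| ≤ m t :=
  (le_total t s).elim (fun hts => hh.abs_le_of_le_of_abs_le hm hts hx.le)
    fun hst => (hh.abs_eq_of_le_of_abs_eq hm hst hx).le

lemma hasBands (hh : IsQuadraticTower h m) (hcont : ∀ t, Continuous (h t))
    (hm : ∀ t, 0 < m (t + 1)) (hmm : ∀ t, 2 * m (t + 1) < m t ^ 2) {a b : ℝ}
    (h0 : IsBand (h 0) (m 0) a b) : ∀ t, HasBands (h t) (m t) (Fin t → Bool)
  | 0 => ⟨fun _ => a, fun _ => b, fun _ => h0, Subsingleton.pairwise⟩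
  | t + 1 => by
    rw [show h (t + 1) = _ from funext (hh t)]
    exact ((hh.hasBands hcont hm hmm h0 t).sq_sub (hcont t) (hm t) (hmm t)).comp_injective
      (Fin.consEquiv fun _ => Bool).symm.injective

end IsQuadraticTower

lemma isQuadraticTower_eval_add_C_half {P : ℕ → ℝ[X]} {r : ℕ → ℝ}
    (hP : ∀ t, P (t + 1) = P t * (P t + C (r t))) :
    IsQuadraticTower (fun t x => (P t + C (r t / 2)).eval x) (fun t => r t / 2) := by
  intro t x
  simp only [hP, eval_add, eval_mul, eval_C]
  ring

lemma abs_eval_add_C_half_le_iff {p : ℝ[X]} {ρ x : ℝ} :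
    |(p + C (ρ / 2)).eval x| ≤ ρ / 2 ↔ -ρ ≤ p.eval x ∧ p.eval x ≤ 0 := by
  rw [eval_add, eval_C, abs_le]
  constructor <;> rintro ⟨h₁, h₂⟩ <;> constructor <;> linarith

lemma isBand_X_sub_one_add_half : IsBand (X - 1 + C (1 / 2) : ℝ[X]).eval (1 / 2) 0 1 := by
  refine ⟨one_pos, -1, by simp, by norm_num, by norm_num, fun x _ y _ hxy => ?_⟩
  simp only [eval_add, eval_sub, eval_X, eval_one, eval_C]
  linarith

lemma natDegree_le_two_pow {R : Type*} [Ring R] {P : ℕ → R[X]} {c : ℕ → R}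
    (hP0 : P 0 = X - 1) (hP : ∀ t, P (t + 1) = P t * (P t + C (c t))) :
    ∀ t, (P t).natDegree ≤ 2 ^ t
  | 0 => by simpa [hP0] using natDegree_X_sub_C_le (1 : R)
  | t + 1 => by
    have := natDegree_le_two_pow hP0 hP t
    rw [hP, pow_succ]
    exact natDegree_mul_le.trans (by rw [natDegree_add_C]; omega)

/-- The set `K(γ)`, written with the centred polynomials `P t + r t / 2`. -/
def weakCantorSet (P : ℕ → ℝ[X]) (r : ℕ → ℝ) : Set ℝ :=
  {x | ∀ t, |(P t + C (r t / 2)).eval x| ≤ r t / 2}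

lemma biInter_Ici_one_eq_weakCantorSet {P : ℕ → ℝ[X]} {r : ℕ → ℝ}
    (hP : ∀ t, P (t + 1) = P t * (P t + C (r t))) (hr : ∀ t, 0 ≤ r t) :
    ⋂ t ∈ Ici 1, {x | -r t ≤ (P t).eval x ∧ (P t).eval x ≤ 0} = weakCantorSet P r := by
  ext x
  simp only [weakCantorSet, mem_iInter₂, mem_Ici, mem_ofPred_eq, ← abs_eval_add_C_half_le_iff]
  refine ⟨fun hx t => ?_, fun hx t _ => hx t⟩
  rcases t with _ | t
  · exact (isQuadraticTower_eval_add_C_half hP).abs_le_of_abs_le_succ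
      (div_nonneg (hr 0) zero_le_two) (hx 1 le_rfl)
  · exact hx (t + 1) (by omega)

theorem sSup_abs_eval_le_of_weakCantorSet {P : ℕ → ℝ[X]} {r : ℕ → ℝ} (hP0 : P 0 = X - 1)
    (hr0 : r 0 = 1) (hP : ∀ t, P (t + 1) = P t * (P t + C (r t))) (hr_pos : ∀ t, 0 < r t)
    (hr_lt : ∀ t, 4 * r (t + 1) < r t ^ 2) {s : ℕ} {x₀ : ℝ}
    (hx₀ : r s / 2 < |(P s).eval x₀ + r s / 2|) {Q : ℝ[X]} (hQ : Q.natDegree ≤ 2 ^ s)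
    (hQx₀ : Q.eval x₀ = 1) :
    sSup ((fun x => |(C ((P s).eval x₀ + r s / 2)⁻¹ * (P s + C (r s / 2))).eval x|) ''
      weakCantorSet P r) ≤ sSup ((fun x => |Q.eval x|) '' weakCantorSet P r) := by
  have hT := isQuadraticTower_eval_add_C_half hP
  have hband₀ : IsBand (P 0 + C (r 0 / 2)).eval (r 0 / 2) 0 1 := by
    simpa only [hP0, hr0] using isBand_X_sub_one_add_half
  have hbands := hT.hasBands (fun t => (P t + C (r t / 2)).continuous)
    (fun t => half_pos (hr_pos _)) (fun t => by nlinarith [hr_lt t]) hband₀ s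
  have hcard : Fintype.card (Fin s → Bool) = 2 ^ s := by simp
  have hdeg : (P s + C (r s / 2)).natDegree ≤ 2 ^ s := by
    rw [natDegree_add_C]
    exact natDegree_le_two_pow hP0 hP s
  have hK_bdd : Bornology.IsBounded (weakCantorSet P r) :=
    (Metric.isBounded_Icc (0 : ℝ) 1).subset fun x hx => by
      have := abs_le.1 (hx 0)
      simp only [hP0, hr0, eval_add, eval_sub, eval_X, eval_one, eval_C] at this
      constructor <;> linarith
  have hd : (P s + C (r s / 2)).eval x₀ = (P s).eval x₀ + r s / 2 := by simp
  rw [← hd]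
  exact sSup_abs_eval_C_inv_mul_le hbands (hcard ▸ hdeg) (hcard ▸ hQ)
    (fun x hx => hT.forall_abs_le_of_abs_eq (fun t => (half_pos (hr_pos t)).le) hx)
    (fun x hx => hx s) hK_bdd (hd ▸ hx₀) hQx₀

lemma pos_of_succ_eq_mul_sq {γ r : ℕ → ℝ} (hγ : ∀ t, 0 < γ (t + 1)) (hr0 : 0 < r 0)
    (hr : ∀ t, r (t + 1) = γ (t + 1) * r t ^ 2) : ∀ t, 0 < r t
  | 0 => hr0
  | t + 1 => hr t ▸ mul_pos (hγ t) (pow_pos (pos_of_succ_eq_mul_sq hγ hr0 hr t) 2)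

theorem stmt18_general (γ : ℕ → ℝ) (hγ : ∀ s, 1 ≤ s → 0 < γ s ∧ γ s < 1 / 4)
    (r : ℕ → ℝ) (hr0 : r 0 = 1)
    (hr : ∀ s, 1 ≤ s → r s = γ s * (r (s - 1)) ^ 2)
    (P : ℕ → Polynomial ℝ) (hP1 : P 1 = X * (X - 1))
    (hP : ∀ s, 1 ≤ s → P (s + 1) = P s * (P s + C (r s)))
    (E : ℕ → Set ℝ)
    (hE : ∀ s, 1 ≤ s → E s = {x : ℝ | -(r s) ≤ (P s).eval x ∧ (P s).eval x ≤ 0})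
    (K : Set ℝ) (hK : K = ⋂ s ∈ Set.Ici 1, E s)
    (s : ℕ) (hs : 1 ≤ s)
    (x₀ : ℝ) (hx₀E : x₀ ∉ E s) :
    (P s).eval x₀ + r s / 2 ≠ 0 ∧
    ∀ R : Polynomial ℝ,
      R = C ((P s).eval x₀ + r s / 2)⁻¹ * (P s + C (r s / 2)) →
      R.eval x₀ = 1 ∧ R.natDegree ≤ 2 ^ s ∧
      ∀ Q : Polynomial ℝ, Q.natDegree ≤ 2 ^ s → Q.eval x₀ = 1 →
        sSup ((fun x => |R.eval x|) '' K) ≤ sSup ((fun x => |Q.eval x|) '' K) := by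
  have hr_succ : ∀ t, r (t + 1) = γ (t + 1) * r t ^ 2 := fun t => hr (t + 1) (by omega)
  have hr_pos := pos_of_succ_eq_mul_sq (fun t => (hγ (t + 1) (by omega)).1) (hr0 ▸ one_pos) hr_succ
  have hr_lt : ∀ t, 4 * r (t + 1) < r t ^ 2 := fun t => by
    rw [hr_succ]
    nlinarith [(hγ (t + 1) (by omega)).2, pow_pos (hr_pos t) 2]
  -- `P 0` is unconstrained; `X - 1` continues the recursion `P 1 = P 0 * (P 0 + C (r 0))`.
  set P₀ := Function.update P 0 (X - 1)
  have hP₀ : ∀ t, P₀ (t + 1) = P₀ t * (P₀ t + C (r t)) := by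
    rintro (_ | t)
    · simp [P₀, hP1, hr0, mul_comm]
    · simpa [P₀] using hP (t + 1) (by omega)
  have hP₀_eq : ∀ t, 1 ≤ t → P₀ t = P t := fun t ht => update_of_ne (by omega) _ _
  have hK' : K = weakCantorSet P₀ r := by
    rw [hK, ← biInter_Ici_one_eq_weakCantorSet hP₀ fun t => (hr_pos t).le]
    exact iInter₂_congr fun t ht => by rw [hE t ht, hP₀_eq t ht]
  have hx₀ : r s / 2 < |(P s).eval x₀ + r s / 2| := lt_of_not_ge fun h => hx₀E <| by
    rw [hE s hs]
    exact abs_eval_add_C_half_le_iff.1 (by rwa [eval_add, eval_C])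
  have hd0 : (P s).eval x₀ + r s / 2 ≠ 0 := fun h0 => by
    rw [h0, abs_zero] at hx₀
    linarith [hr_pos s]
  refine ⟨hd0, ?_⟩
  rintro R rfl
  refine ⟨by simp [inv_mul_cancel₀ hd0], (natDegree_C_mul_le _ _).trans ?_, fun Q hQ hQx₀ => ?_⟩
  · rw [natDegree_add_C, ← hP₀_eq s hs]
    exact natDegree_le_two_pow (by simp [P₀]) hP₀ s
  · rw [hK', ← hP₀_eq s hs]
    exact sSup_abs_eval_le_of_weakCantorSet (by simp [P₀]) hr0 hP₀ hr_pos hr_lt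
      (hP₀_eq s hs ▸ hx₀) hQ hQx₀

/-- In the weakly equilibrium Cantor set construction, let `s ≥ 1` and
`x₀ ∈ (0,1)` with `x₀ ∉ E s`. Then `P s (x₀) + r s / 2 ≠ 0`, and the polynomial
`R(x) := (P s (x) + r s / 2) / (P s (x₀) + r s / 2)` satisfies `R(x₀) = 1`,
`deg R ≤ 2^s`, and `sup_{x ∈ K(γ)} |R(x)| ≤ sup_{x ∈ K(γ)} |Q(x)|` for every real
polynomial `Q` of degree at most `2^s` with `Q(x₀) = 1`. -/
theorem stmt18 (γ : ℕ → ℝ) (hγ : ∀ s, 1 ≤ s → 0 < γ s ∧ γ s < 1 / 4)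
    (r : ℕ → ℝ) (hr0 : r 0 = 1)
    (hr : ∀ s, 1 ≤ s → r s = γ s * (r (s - 1)) ^ 2)
    (P : ℕ → Polynomial ℝ) (hP1 : P 1 = X * (X - 1))
    (hP : ∀ s, 1 ≤ s → P (s + 1) = P s * (P s + C (r s)))
    (E : ℕ → Set ℝ)
    (hE : ∀ s, 1 ≤ s → E s = {x : ℝ | -(r s) ≤ (P s).eval x ∧ (P s).eval x ≤ 0})
    (K : Set ℝ) (hK : K = ⋂ s ∈ Set.Ici 1, E s)
    (s : ℕ) (hs : 1 ≤ s)
    (x₀ : ℝ) (hx₀ : x₀ ∈ Set.Ioo (0 : ℝ) 1) (hx₀E : x₀ ∉ E s) :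
    (P s).eval x₀ + r s / 2 ≠ 0 ∧
    ∀ R : Polynomial ℝ,
      R = C ((P s).eval x₀ + r s / 2)⁻¹ * (P s + C (r s / 2)) →
      R.eval x₀ = 1 ∧ R.natDegree ≤ 2 ^ s ∧
      ∀ Q : Polynomial ℝ, Q.natDegree ≤ 2 ^ s → Q.eval x₀ = 1 →
        sSup ((fun x => |R.eval x|) '' K) ≤ sSup ((fun x => |Q.eval x|) '' K) :=
  stmt18_general γ hγ r hr0 hr P hP1 hP E hE K hK s hs x₀ hx₀E
end
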